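/- arXiv:1810.09323 — 4 statements merged into one kernel-verified Lean document; each statement's English description precedes it below -/
import Mathlib

section
/- A set of edges in a finite graph G is contained in the edge set of an even subgraph of G if and only if it contains no odd edge cut of G (Jaeger's theorem). -/
open SimpleGraph

/-- The edge boundary (cut) `∂A` of a vertex set `A` in a graph `G`. -/
def edgeCut {V : Type*} (G : SimpleGraph V) (A : Set V) : Set (Sym2 V) :=
  {e | ∃ u v, G.Adj u v ∧ u ∈ A ∧ v ∉ A ∧ e = s(u, v)}

namespace JaegerAux

open Finset

variable {V : Type*} [Fintype V]

open scoped Classical in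
noncomputable def ind (P : Prop) : ZMod 2 := if P then 1 else 0

lemma ind_pos {P : Prop} (h : P) : ind P = 1 := by simp [ind, h]
lemma ind_neg {P : Prop} (h : ¬P) : ind P = 0 := by simp [ind, h]

lemma zmod2_add_self : ∀ x : ZMod 2, x + x = 0 := by decide
lemma zmod2_cases : ∀ x : ZMod 2, x = 0 ∨ x = 1 := by decide

lemma even_iff_cast {n : ℕ} : Even n ↔ (n : ZMod 2) = 0 := by
  rw [ZMod.natCast_eq_zero_iff]
  exact even_iff_two_dvd

open scoped Classical in
noncomputable def sig (S₀ : Set (Sym2 V)) (v : V) : ZMod 2 := ∑ u, ind (s(v,u) ∈ S₀)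

open scoped Classical in
/-- Double counting: the sum of degree parities over `A` equals the parity of the
number of `S₀`-edges crossing `A`. -/
lemma keyA (S₀ : Set (Sym2 V)) (hirr : ∀ x y, s(x,y) ∈ S₀ → x ≠ y) (A : Set V) :
    ∑ v ∈ univ.filter (· ∈ A), sig S₀ v
      = (({e | e ∈ S₀ ∧ ∃ x y, x ∈ A ∧ y ∉ A ∧ e = s(x,y)}).ncard : ZMod 2) := by
  have hsplit : ∀ v : V, sig S₀ v =
      (∑ u ∈ univ.filter (· ∈ A), ind (s(v,u) ∈ S₀))
        + ∑ u ∈ univ.filter (¬ · ∈ A), ind (s(v,u) ∈ S₀) := by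
    intro v
    rw [sig, ← Finset.sum_filter_add_sum_filter_not univ (· ∈ A)]
  rw [Finset.sum_congr rfl fun v _ => hsplit v, Finset.sum_add_distrib]
  have h1 : ∑ v ∈ univ.filter (· ∈ A), ∑ u ∈ univ.filter (· ∈ A), ind (s(v,u) ∈ S₀) = 0 := by
    rw [← Finset.sum_product']
    refine Finset.sum_involution (fun p _ => p.swap) ?_ ?_ ?_ ?_
    · intro p hp
      have : s(p.2, p.1) = s(p.1, p.2) := Sym2.eq_swap
      simp only [Prod.swap, this]
      exact zmod2_add_self _
    · intro p hp hne
      intro hswap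
      have : p.1 = p.2 := by
        have := congrArg Prod.fst hswap
        simpa using this.symm
      exact hne (by rw [this]; exact ind_neg (fun hmem => hirr _ _ hmem rfl))
    · intro p hp
      simp only [Finset.mem_product, Finset.mem_filter] at hp ⊢
      exact ⟨⟨Finset.mem_univ _, hp.2.2⟩, ⟨Finset.mem_univ _, hp.1.2⟩⟩
    · intro p hp; rfl
  rw [h1, zero_add]
  rw [← Finset.sum_product']
  set F := ((univ.filter (· ∈ A)) ×ˢ (univ.filter (¬ · ∈ A))).filter
      (fun p : V × V => s(p.1, p.2) ∈ S₀) with hF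
  have h2 : ∑ p ∈ (univ.filter (· ∈ A)) ×ˢ (univ.filter (¬ · ∈ A)),
      ind (s(p.1, p.2) ∈ S₀) = (F.card : ZMod 2) := by
    rw [hF, ← Finset.sum_boole]
    refine Finset.sum_congr rfl fun p _ => ?_
    by_cases h : s(p.1,p.2) ∈ S₀
    · rw [ind_pos h, if_pos h]
    · rw [ind_neg h, if_neg h]
  rw [h2]
  congr 1
  have himage : {e | e ∈ S₀ ∧ ∃ x y, x ∈ A ∧ y ∉ A ∧ e = s(x,y)}
      = ↑(F.image (fun p : V × V => s(p.1, p.2))) := by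
    ext e
    simp only [Set.mem_setOf_eq, Finset.coe_image, Set.mem_image, Finset.mem_coe, hF,
      Finset.mem_filter, Finset.mem_product, Finset.mem_univ, true_and]
    constructor
    · rintro ⟨he, x, y, hx, hy, rfl⟩
      exact ⟨(x,y), ⟨⟨hx, hy⟩, he⟩, rfl⟩
    · rintro ⟨⟨x,y⟩, ⟨⟨hx, hy⟩, he⟩, rfl⟩
      exact ⟨he, x, y, hx, hy, rfl⟩
  rw [himage, Set.ncard_coe_finset]
  rw [Finset.card_image_of_injOn]
  rintro ⟨x,y⟩ hxy ⟨z,w⟩ hzw heq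
  simp only [hF, Finset.mem_coe, Finset.mem_filter, Finset.mem_product, Finset.mem_filter,
    Finset.mem_univ, true_and] at hxy hzw
  rcases Sym2.eq_iff.mp heq with ⟨rfl, rfl⟩ | ⟨rfl, rfl⟩
  · rfl
  · exact absurd hxy.1.1 hzw.1.2

open scoped Classical in
/-- Parity of incidences of `v` with the edges of a walk. -/
lemma walk_count (G₀ : SimpleGraph V) {a b : V} (p : G₀.Walk a b) (v : V) :
    ∑ u, ((p.edges.count s(v,u) : ℕ) : ZMod 2) = ind (v = a) + ind (v = b) := by
  induction p with
  | nil =>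
    simp only [SimpleGraph.Walk.edges_nil, List.count_nil, Nat.cast_zero, Finset.sum_const_zero]
    exact (zmod2_add_self (ind (v = _))).symm
  | cons h q ih =>
    rename_i x y w
    have hxy : x ≠ y := h.ne
    simp only [SimpleGraph.Walk.edges_cons, List.count_cons]
    push_cast
    rw [Finset.sum_add_distrib, ih]
    have hstep : ∑ u, (if (s(x,y) == s(v,u)) = true then (1:ZMod 2) else 0)
        = ind (v = x) + ind (v = y) := by
      have hcond : ∀ u, ((s(x,y) == s(v,u)) = true) ↔ s(v,u) = s(x,y) := by
        intro u; rw [beq_iff_eq]; exact eq_comm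
      by_cases hvx : v = x
      · subst hvx
        have : ∀ u, ((s(v,y) == s(v,u)) = true) ↔ u = y := by
          intro u; rw [hcond]; exact Sym2.congr_right
        rw [Finset.sum_congr rfl fun u _ => by
          rw [if_congr (this u) rfl rfl]]
        rw [Finset.sum_ite_eq' univ y (fun _ => (1:ZMod 2))]
        rw [if_pos (Finset.mem_univ _), ind_pos rfl, ind_neg hxy]
        rw [add_zero]
      · by_cases hvy : v = y
        · subst hvy
          have : ∀ u, ((s(x,v) == s(v,u)) = true) ↔ u = x := by
            intro u; rw [hcond]
            rw [show s(x,v) = s(v,x) from Sym2.eq_swap]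
            exact Sym2.congr_right
          rw [Finset.sum_congr rfl fun u _ => by
            rw [if_congr (this u) rfl rfl]]
          rw [Finset.sum_ite_eq' univ x (fun _ => (1:ZMod 2))]
          rw [if_pos (Finset.mem_univ _), ind_pos rfl, ind_neg (Ne.symm hxy), zero_add]
        · have : ∀ u, ¬ ((s(x,y) == s(v,u)) = true) := by
            intro u hu
            rcases Sym2.eq_iff.mp ((hcond u).mp hu) with ⟨h1, _⟩ | ⟨h1, _⟩
            exacts [hvx h1, hvy h1]
          rw [Finset.sum_congr rfl fun u _ => if_neg (this u)]
          rw [Finset.sum_const_zero, ind_neg hvx, ind_neg hvy, add_zero]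
    rw [hstep]
    linear_combination zmod2_add_self (ind (v = y))

lemma sig_edgeSet (H : SimpleGraph V) (v : V) :
    sig H.edgeSet v = ((H.neighborSet v).ncard : ZMod 2) := by
  classical
  have h1 : H.neighborSet v = ↑(univ.filter fun u => H.Adj v u) := by
    ext u; simp [SimpleGraph.neighborSet]
  rw [h1, Set.ncard_coe_finset, sig, ← Finset.sum_boole]
  refine Finset.sum_congr rfl fun u _ => ?_
  by_cases h : H.Adj v u
  · rw [if_pos h, ind_pos ((SimpleGraph.mem_edgeSet _).mpr h)]
  · rw [if_neg h, ind_neg (fun hm => h ((SimpleGraph.mem_edgeSet _).mp hm))]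

end JaegerAux

open JaegerAux Finset in
/-- Jaeger's theorem: a set of edges of a finite graph `G` is contained in an even
(spanning) subgraph of `G` if and only if it contains no odd cut of `G`. -/
theorem stmt2 {V : Type*} [Fintype V] (G : SimpleGraph V) (S : Set (Sym2 V))
    (hS : S ⊆ G.edgeSet) :
    (∃ H : SimpleGraph V, H ≤ G ∧ (∀ v : V, Even ((H.neighborSet v).ncard)) ∧
        S ⊆ H.edgeSet) ↔
      ¬ ∃ A : Set V, edgeCut G A ⊆ S ∧ Odd (edgeCut G A).ncard := by
  classical
  constructor
  · rintro ⟨H, hHG, hEv, hSH⟩ ⟨A, hcut, hodd⟩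
    have hirr : ∀ x y, s(x,y) ∈ H.edgeSet → x ≠ y :=
      fun x y h => ((SimpleGraph.mem_edgeSet _).mp h).ne
    have hkey := keyA H.edgeSet hirr A
    have hL : ∑ v ∈ univ.filter (· ∈ A), sig H.edgeSet v = 0 := by
      apply Finset.sum_eq_zero; intro v _
      rw [sig_edgeSet]
      exact even_iff_cast.mp (hEv v)
    have hcross : {e | e ∈ H.edgeSet ∧ ∃ x y, x ∈ A ∧ y ∉ A ∧ e = s(x,y)} = edgeCut G A := by
      ext e; constructor
      · rintro ⟨he, x, y, hx, hy, rfl⟩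
        exact ⟨x, y, hHG ((SimpleGraph.mem_edgeSet _).mp he), hx, hy, rfl⟩
      · rintro ⟨x, y, hadj, hx, hy, rfl⟩
        exact ⟨hSH (hcut ⟨x, y, hadj, hx, hy, rfl⟩), x, y, hx, hy, rfl⟩
    rw [hL, hcross] at hkey
    exact (Nat.not_even_iff_odd.mpr hodd) (even_iff_cast.mpr hkey.symm)
  · intro hno
    set G' := G.deleteEdges S with hG'
    have hG'le : G'.edgeSet ⊆ G.edgeSet := by
      rw [hG', SimpleGraph.edgeSet_deleteEdges]; exact Set.diff_subset
    have hG'S : ∀ e, e ∈ G'.edgeSet → e ∉ S := by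
      intro e he; rw [hG', SimpleGraph.edgeSet_deleteEdges] at he; exact he.2
    -- roots of components of G'
    set root : V → V := fun v => Quot.out (G'.connectedComponentMk v) with hroot
    have hccroot : ∀ v, G'.connectedComponentMk (root v) = G'.connectedComponentMk v := by
      intro v; exact Quot.out_eq _
    have hrootcc : ∀ {u v : V}, G'.connectedComponentMk u = G'.connectedComponentMk v →
        root u = root v := by
      intro u v h; rw [hroot]; simp only; rw [h]
    have hrootidem : ∀ v, root (root v) = root v := fun v => hrootcc (hccroot v)
    have hreach : ∀ v, G'.Reachable (root v) v := fun v =>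
      (SimpleGraph.ConnectedComponent.eq).mp (hccroot v)
    set wk : ∀ v : V, G'.Walk (root v) v := fun v => (hreach v).some with hwk
    set T : Finset V := univ.filter (fun v => sig S v = 1) with hT
    set J : Sym2 V → ZMod 2 :=
      fun e => ∑ t ∈ T, (((wk t).edges.count e : ℕ) : ZMod 2) with hJ
    have hJsupp : ∀ e, J e ≠ 0 → e ∈ G'.edgeSet := by
      intro e h
      by_contra hnot
      apply h
      rw [hJ]
      apply Finset.sum_eq_zero
      intro t _
      have : e ∉ (wk t).edges := fun hmem => hnot ((wk t).edges_subset_edgeSet hmem)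
      rw [List.count_eq_zero.mpr this, Nat.cast_zero]
    -- the even subgraph
    set ES : Set (Sym2 V) := {e | e ∈ S ∨ J e = 1} with hES
    have hsub : ES ⊆ G.edgeSet := by
      rintro e (he | he)
      · exact hS he
      · exact hG'le (hJsupp e (by rw [he]; exact one_ne_zero))
    refine ⟨SimpleGraph.fromEdgeSet ES, ?_, ?_, ?_⟩
    · intro a b hab
      rw [SimpleGraph.fromEdgeSet_adj] at hab
      exact (SimpleGraph.mem_edgeSet _).mp (hsub hab.1)
    · -- evenness
      intro v
      have hedge : (SimpleGraph.fromEdgeSet ES).edgeSet = ES := by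
        rw [SimpleGraph.edgeSet_fromEdgeSet]
        ext e
        constructor
        · rintro ⟨he, _⟩; exact he
        · intro he
          exact ⟨he, fun hdiag => SimpleGraph.not_isDiag_of_mem_edgeSet G (hsub he) hdiag⟩
      rw [even_iff_cast, ← sig_edgeSet, sig, hedge]
      -- split indicator
      have hsplit : ∀ u : V, ind (s(v,u) ∈ ES) = ind (s(v,u) ∈ S) + J s(v,u) := by
        intro u
        by_cases h1 : s(v,u) ∈ S
        · have hJ0 : J s(v,u) = 0 := by
            by_contra h
            exact (hG'S _ (hJsupp _ h)) h1
          rw [ind_pos h1, hJ0, add_zero]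
          exact ind_pos (Or.inl h1)
        · rcases zmod2_cases (J s(v,u)) with h2 | h2
          · rw [h2, add_zero, ind_neg h1]
            refine ind_neg ?_
            intro hmem
            rcases hmem with h | h
            · exact h1 h
            · rw [h2] at h; exact absurd h (by decide)
          · rw [h2, ind_neg h1, zero_add]
            exact ind_pos (Or.inr h2)
      rw [Finset.sum_congr rfl fun u _ => hsplit u, Finset.sum_add_distrib]
      -- second sum via walks
      have hswap : ∑ u, J s(v,u) = ∑ t ∈ T, (ind (v = root t) + ind (v = t)) := by
        rw [show ∑ u, J s(v,u) = ∑ u, ∑ t ∈ T, (((wk t).edges.count s(v,u) : ℕ) : ZMod 2)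
          from rfl]
        rw [Finset.sum_comm]
        exact Finset.sum_congr rfl fun t _ => walk_count G' (wk t) v
      rw [hswap, Finset.sum_add_distrib]
      -- ∑ t ∈ T, ind (v = t) = sig S v
      have hT1 : ∑ t ∈ T, ind (v = t) = sig S v := by
        by_cases hv : v ∈ T
        · rw [Finset.sum_eq_single v (fun t _ hne => ind_neg (fun h => hne h.symm))
            (fun h => absurd hv h), ind_pos rfl]
          rw [hT] at hv
          exact ((Finset.mem_filter.mp hv).2).symm
        · rw [Finset.sum_eq_zero (fun t ht => ind_neg (fun h => hv (by rw [h]; exact ht)))]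
          rcases zmod2_cases (sig S v) with h | h
          · rw [h]
          · exact absurd (show v ∈ T by rw [hT]; exact Finset.mem_filter.mpr ⟨Finset.mem_univ _, h⟩) hv
      -- component parity: the sum of sig over any component is 0
      have hcomp : ∀ v0 : V,
          ∑ u ∈ univ.filter (fun u =>
            G'.connectedComponentMk u = G'.connectedComponentMk v0), sig S u = 0 := by
        intro v0
        set A : Set V := {u | G'.connectedComponentMk u = G'.connectedComponentMk v0} with hA
        have hfilter : (univ.filter (fun u =>
            G'.connectedComponentMk u = G'.connectedComponentMk v0)) = univ.filter (· ∈ A) := by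
          apply Finset.filter_congr; intro u _; rw [hA]; rfl
        rw [hfilter, keyA S (fun x y h => ((SimpleGraph.mem_edgeSet _).mp (hS h)).ne) A]
        have hAclosed : ∀ x y, G.Adj x y → x ∈ A → y ∉ A → s(x,y) ∈ S := by
          intro x y hadj hx hy
          by_contra hnot
          have hadj' : G'.Adj x y := by
            rw [hG', SimpleGraph.deleteEdges_adj]; exact ⟨hadj, hnot⟩
          exact hy (show G'.connectedComponentMk y = G'.connectedComponentMk v0 from
            (SimpleGraph.ConnectedComponent.connectedComponentMk_eq_of_adj hadj').symm.trans hx)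
        have hcross : {e | e ∈ S ∧ ∃ x y, x ∈ A ∧ y ∉ A ∧ e = s(x,y)} = edgeCut G A := by
          ext e; constructor
          · rintro ⟨he, x, y, hx, hy, rfl⟩
            exact ⟨x, y, (SimpleGraph.mem_edgeSet _).mp (hS he), hx, hy, rfl⟩
          · rintro ⟨x, y, hadj, hx, hy, rfl⟩
            exact ⟨hAclosed x y hadj hx hy, x, y, hx, hy, rfl⟩
        have hcutS : edgeCut G A ⊆ S := by
          rintro e ⟨x, y, hadj, hx, hy, rfl⟩
          exact hAclosed x y hadj hx hy
        have hnotodd : ¬ Odd (edgeCut G A).ncard := fun ho => hno ⟨A, hcutS, ho⟩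
        rw [hcross]
        exact even_iff_cast.mp (Nat.not_odd_iff_even.mp hnotodd)
      -- ∑ t ∈ T, ind (v = root t) = 0
      have hT2 : ∑ t ∈ T, ind (v = root t) = 0 := by
        by_cases hv : root v = v
        · have hiff : ∀ t : V, (v = root t) ↔
              (G'.connectedComponentMk t = G'.connectedComponentMk v) := by
            intro t
            constructor
            · intro h
              rw [← hccroot t, ← h]
            · intro h
              rw [hrootcc h, hv]
          have : ∀ t : V, ind (v = root t)
              = ind (G'.connectedComponentMk t = G'.connectedComponentMk v) := by
            intro t
            by_cases h : v = root t
            · rw [ind_pos h, ind_pos ((hiff t).mp h)]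
            · rw [ind_neg h, ind_neg (fun hh => h ((hiff t).mpr hh))]
          rw [Finset.sum_congr rfl fun t _ => this t]
          -- now relate to hcomp
          have hswap2 : ∑ t ∈ T, ind (G'.connectedComponentMk t = G'.connectedComponentMk v)
              = ∑ u ∈ univ.filter (fun u =>
                  G'.connectedComponentMk u = G'.connectedComponentMk v), sig S u := by
            rw [hT]
            rw [Finset.sum_filter, Finset.sum_filter]
            refine Finset.sum_congr rfl fun u _ => ?_
            by_cases h1 : sig S u = 1
            · by_cases h2 : G'.connectedComponentMk u = G'.connectedComponentMk v
              · rw [if_pos h1, if_pos h2, ind_pos h2, h1]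
              · rw [if_pos h1, if_neg h2, ind_neg h2]
            · rcases zmod2_cases (sig S u) with h | h
              · by_cases h2 : G'.connectedComponentMk u = G'.connectedComponentMk v
                · rw [if_neg h1, if_pos h2, h]
                · rw [if_neg h1, if_neg h2]
              · exact absurd h h1
          rw [hswap2, hcomp v]
        · apply Finset.sum_eq_zero
          intro t _
          apply ind_neg
          intro h
          exact hv (by rw [h, hrootidem t, ← h])
      rw [hT1, hT2, zero_add, show (∑ u, ind (s(v,u) ∈ S)) = sig S v from rfl]
      exact zmod2_add_self _
    · -- S ⊆ edgeSet
      intro e he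
      rw [SimpleGraph.edgeSet_fromEdgeSet]
      exact ⟨Or.inl he, fun hdiag =>
        SimpleGraph.not_isDiag_of_mem_edgeSet G (hS he) hdiag⟩
end

section
/- In the ladder graph with k+1 rungs (k ≥ 3), no connected even subgraph contains three distinct rungs. -/
open SimpleGraph

/-- The ladder graph with `k+1` rungs: the Cartesian (box) product of the path
on `k+1` vertices with `K_2`. -/
def ladder (k : ℕ) : SimpleGraph (Fin (k + 1) × Fin 2) :=
  SimpleGraph.boxProd (SimpleGraph.pathGraph (k + 1)) (completeGraph (Fin 2))

/-- The `i`-th rung of the ladder. -/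
def rung {k : ℕ} (i : Fin (k + 1)) : Sym2 (Fin (k + 1) × Fin 2) :=
  s((i, (0 : Fin 2)), (i, (1 : Fin 2)))

lemma ladder_adj {k : ℕ} {x y : Fin (k+1) × Fin 2} :
    (ladder k).Adj x y ↔
      ((x.1.val + 1 = y.1.val ∨ y.1.val + 1 = x.1.val) ∧ x.2 = y.2) ∨
      (x.1 = y.1 ∧ x.2 ≠ y.2) := by
  simp [ladder, boxProd_adj, pathGraph_adj, completeGraph_eq_top, top_adj]
  tauto

lemma even2 {α : Type*} [DecidableEq α] {s : Finset α} {y z : α} (hyz : y ≠ z)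
    (hs : s ⊆ {y, z}) (he : Even s.card) : (y ∈ s ↔ z ∈ s) := by
  classical
  have h1 : ({y, z} : Finset α).filter (· ∈ s) = s := by
    ext a
    simp only [Finset.mem_filter]
    exact ⟨fun h => h.2, fun h => ⟨hs h, h⟩⟩
  have h2 : s.card = (if y ∈ s then 1 else 0) + (if z ∈ s then 1 else 0) := by
    conv_lhs => rw [← h1]
    rw [Finset.card_filter,
      show ({y, z} : Finset α) = insert y {z} from rfl,
      Finset.sum_insert (by simp [hyz]), Finset.sum_singleton]
  rw [h2] at he
  by_cases hy : y ∈ s <;> by_cases hz : z ∈ s <;>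
    simp [hy, hz, Nat.even_iff] at he ⊢

lemma even3 {α : Type*} [DecidableEq α] {s : Finset α} {x y z : α}
    (hxy : x ≠ y) (hxz : x ≠ z) (hyz : y ≠ z)
    (hs : s ⊆ {x, y, z}) (he : Even s.card) :
    (x ∈ s ↔ ¬ (y ∈ s ↔ z ∈ s)) := by
  classical
  have h1 : ({x, y, z} : Finset α).filter (· ∈ s) = s := by
    ext a
    simp only [Finset.mem_filter]
    exact ⟨fun h => h.2, fun h => ⟨hs h, h⟩⟩
  have h2 : s.card = (if x ∈ s then 1 else 0) +
      ((if y ∈ s then 1 else 0) + (if z ∈ s then 1 else 0)) := by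
    conv_lhs => rw [← h1]
    rw [Finset.card_filter,
      show ({x, y, z} : Finset α) = insert x (insert y {z}) from rfl,
      Finset.sum_insert (by simp [hxy, hxz]),
      Finset.sum_insert (by simp [hyz]), Finset.sum_singleton]
  rw [h2] at he
  by_cases hx : x ∈ s <;> by_cases hy : y ∈ s <;> by_cases hz : z ∈ s <;>
    simp [hx, hy, hz, Nat.even_iff] at he ⊢ <;> tauto

section Main

variable {k : ℕ} {H : SimpleGraph (Fin (k+1) × Fin 2)}

noncomputable def nb (H : SimpleGraph (Fin (k+1) × Fin 2)) (v : Fin (k+1) × Fin 2) :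
    Finset (Fin (k+1) × Fin 2) :=
  (Set.toFinite (H.neighborSet v)).toFinset

lemma mem_nb {v w : Fin (k+1) × Fin 2} : w ∈ nb H v ↔ H.Adj v w := by
  simp [nb]

lemma even_nb (he : ∀ v, Even ((H.neighborSet v).ncard)) (v : Fin (k+1) × Fin 2) :
    Even (nb H v).card := by
  have := he v
  rwa [Set.ncard_eq_toFinset_card _ (Set.toFinite _)] at this

lemma fin2_cases {b c w : Fin 2} (hbc : b ≠ c) (hw : w ≠ b) : w = c := by
  have h1 : b.val ≠ c.val := fun h => hbc (Fin.ext h)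
  have h2 : w.val ≠ b.val := fun h => hw (Fin.ext h)
  have := b.isLt; have := c.isLt; have := w.isLt
  exact Fin.ext (by omega)

lemma nb_subset (hH : H ≤ ladder k) {p q r : Fin (k+1)}
    (hq : q.val + 1 = p.val) (hr : p.val + 1 = r.val) {b c : Fin 2} (hbc : b ≠ c) :
    nb H (p, b) ⊆ {(p, c), (q, b), (r, b)} := by
  intro w hw
  have hadj := hH (mem_nb.mp hw)
  rw [ladder_adj] at hadj
  simp only [Finset.mem_insert, Finset.mem_singleton, Prod.ext_iff, Fin.ext_iff,
    ne_eq] at hadj ⊢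
  have := b.isLt; have := c.isLt; have := w.2.isLt
  have hbc' : b.val ≠ c.val := fun h => hbc (Fin.ext h)
  omega

lemma nb_subset0 (hH : H ≤ ladder k) {p r : Fin (k+1)}
    (hp : p.val = 0) (hr : p.val + 1 = r.val) {b c : Fin 2} (hbc : b ≠ c) :
    nb H (p, b) ⊆ {(p, c), (r, b)} := by
  intro w hw
  have hadj := hH (mem_nb.mp hw)
  rw [ladder_adj] at hadj
  simp only [Finset.mem_insert, Finset.mem_singleton, Prod.ext_iff, Fin.ext_iff,
    ne_eq] at hadj ⊢
  have := b.isLt; have := c.isLt; have := w.2.isLt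
  have hbc' : b.val ≠ c.val := fun h => hbc (Fin.ext h)
  omega

lemma iff_trick {V L0 R0 L1 R1 : Prop} (h0 : V ↔ ¬(L0 ↔ R0)) (h1 : V ↔ ¬(L1 ↔ R1))
    (hL : L0 ↔ L1) : R0 ↔ R1 := by tauto

lemma col_parity (hH : H ≤ ladder k) (he : ∀ v, Even ((H.neighborSet v).ncard)) :
    ∀ j : ℕ, ∀ hj : j < k,
      (H.Adj (⟨j, by omega⟩, 0) (⟨j+1, by omega⟩, 0) ↔
       H.Adj (⟨j, by omega⟩, 1) (⟨j+1, by omega⟩, 1)) := by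
  have h01 : (0 : Fin 2) ≠ 1 := by decide
  intro j
  induction j with
  | zero =>
    intro hj
    have e0 := even2
      (by simp [Prod.ext_iff, Fin.ext_iff] <;> omega)
      (nb_subset0 (k := k) hH (p := ⟨0, by omega⟩) (r := ⟨1, by omega⟩) rfl rfl h01)
      (even_nb he _)
    have e1 := even2
      (by simp [Prod.ext_iff, Fin.ext_iff] <;> omega)
      (nb_subset0 (k := k) hH (p := ⟨0, by omega⟩) (r := ⟨1, by omega⟩) rfl rfl h01.symm)
      (even_nb he _)
    rw [mem_nb, mem_nb] at e0 e1
    have hv : H.Adj (⟨0, by omega⟩, 0) ((⟨0, by omega⟩ : Fin (k+1)), 1) ↔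
        H.Adj (⟨0, by omega⟩, 1) ((⟨0, by omega⟩ : Fin (k+1)), 0) := adj_comm H _ _
    exact e0.symm.trans (hv.trans e1)
  | succ j ih =>
    intro hj
    have hj' : j + 1 < k + 1 := by omega
    have hj'' : j + 2 < k + 1 := by omega
    have e0 := even3
      (x := ((⟨j+1, hj'⟩ : Fin (k+1)), (1 : Fin 2)))
      (y := ((⟨j, by omega⟩ : Fin (k+1)), (0 : Fin 2)))
      (z := ((⟨j+2, hj''⟩ : Fin (k+1)), (0 : Fin 2)))
      (by simp [Prod.ext_iff, Fin.ext_iff] <;> omega)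
      (by simp [Prod.ext_iff, Fin.ext_iff] <;> omega)
      (by simp [Prod.ext_iff, Fin.ext_iff] <;> omega)
      (nb_subset hH (p := ⟨j+1, hj'⟩) (q := ⟨j, by omega⟩) (r := ⟨j+2, hj''⟩)
        rfl rfl h01)
      (even_nb he _)
    have e1 := even3
      (x := ((⟨j+1, hj'⟩ : Fin (k+1)), (0 : Fin 2)))
      (y := ((⟨j, by omega⟩ : Fin (k+1)), (1 : Fin 2)))
      (z := ((⟨j+2, hj''⟩ : Fin (k+1)), (1 : Fin 2)))
      (by simp [Prod.ext_iff, Fin.ext_iff] <;> omega)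
      (by simp [Prod.ext_iff, Fin.ext_iff] <;> omega)
      (by simp [Prod.ext_iff, Fin.ext_iff] <;> omega)
      (nb_subset hH (p := ⟨j+1, hj'⟩) (q := ⟨j, by omega⟩) (r := ⟨j+2, hj''⟩)
        rfl rfl h01.symm)
      (even_nb he _)
    simp only [mem_nb] at e0 e1
    have ihh := ih (by omega)
    have hv : H.Adj (⟨j+1, hj'⟩, 0) ((⟨j+1, hj'⟩ : Fin (k+1)), 1) ↔
        H.Adj (⟨j+1, hj'⟩, 1) ((⟨j+1, hj'⟩ : Fin (k+1)), 0) := adj_comm H _ _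
    have hl0 : H.Adj (⟨j+1, hj'⟩, 0) ((⟨j, by omega⟩ : Fin (k+1)), 0) ↔
        H.Adj (⟨j, by omega⟩, 0) ((⟨j+1, hj'⟩ : Fin (k+1)), 0) := adj_comm H _ _
    have hl1 : H.Adj (⟨j+1, hj'⟩, 1) ((⟨j, by omega⟩ : Fin (k+1)), 1) ↔
        H.Adj (⟨j, by omega⟩, 1) ((⟨j+1, hj'⟩ : Fin (k+1)), 1) := adj_comm H _ _
    exact iff_trick e0 (hv.trans e1) (hl0.trans (ihh.trans hl1.symm))

lemma cross {u v : Fin (k+1) × Fin 2} (W : H.Walk u v) (j : ℕ)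
    (hu : u.1.val ≤ j) (hv : j < v.1.val) :
    ∃ x y, H.Adj x y ∧ x.1.val ≤ j ∧ j < y.1.val := by
  induction W with
  | nil => omega
  | @cons a b c h W ih =>
    by_cases hb : b.1.val ≤ j
    · exact ih hb hv
    · exact ⟨a, b, h, hu, by omega⟩

lemma cross_edge (hH : H ≤ ladder k) (he : ∀ v, Even ((H.neighborSet v).ncard))
    {u v : Fin (k+1) × Fin 2} (W : H.Walk u v) (j : ℕ)
    (hu : u.1.val ≤ j) (hv : j < v.1.val) (hj : j < k) :
    H.Adj (⟨j, by omega⟩, 0) (⟨j+1, by omega⟩, 0) := by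
  obtain ⟨x, y, hadj, hx, hy⟩ := cross W j hu hv
  obtain ⟨x1, x2⟩ := x
  obtain ⟨y1, y2⟩ := y
  have hl := hH hadj
  rw [ladder_adj] at hl
  have hx' : x1.val ≤ j := hx
  have hy' : j < y1.val := hy
  rcases hl with ⟨h1, h2⟩ | ⟨h1, h2⟩
  · have h2' : x2 = y2 := h2
    subst h2'
    have h1' : x1.val + 1 = y1.val ∨ y1.val + 1 = x1.val := h1
    have hx1 : x1 = (⟨j, Nat.lt_succ_of_lt hj⟩ : Fin (k+1)) :=
      Fin.ext (show x1.val = j by omega)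
    have hy1 : y1 = (⟨j+1, Nat.succ_lt_succ hj⟩ : Fin (k+1)) :=
      Fin.ext (show y1.val = j + 1 by omega)
    rw [hx1, hy1] at hadj
    by_cases hb : x2 = 0
    · rwa [hb] at hadj
    · have hb1 : x2 = 1 := fin2_cases (by decide) hb
      rw [hb1] at hadj
      exact (col_parity hH he j hj).mpr hadj
  · have h1' : x1 = y1 := h1
    have := congrArg Fin.val h1'
    omega

lemma key (hH : H ≤ ladder k) (he : ∀ v, Even ((H.neighborSet v).ncard))
    (hc : ∀ u ∈ H.support, ∀ v ∈ H.support, H.Reachable u v)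
    (a b c : Fin (k+1)) (hab : a < b) (hbc : b < c)
    (ha : H.Adj (a, 0) (a, 1)) (hb : H.Adj (b, 0) (b, 1)) (hca : H.Adj (c, 0) (c, 1)) :
    False := by
  have h01 : (0 : Fin 2) ≠ 1 := by decide
  have hab' : a.val < b.val := hab
  have hbc' : b.val < c.val := hbc
  have hck := c.isLt
  have hbk : b.val < k := by omega
  have hb1 : 1 ≤ b.val := by omega
  obtain ⟨W1⟩ := hc (a, 0) ⟨(a,1), ha⟩ (b, 0) ⟨(b,1), hb⟩
  obtain ⟨W2⟩ := hc (b, 0) ⟨(b,1), hb⟩ (c, 0) ⟨(c,1), hca⟩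
  have A1 : H.Adj (⟨b.val - 1, by omega⟩, 0) (⟨b.val - 1 + 1, by omega⟩, 0) :=
    cross_edge hH he W1 (b.val - 1) (show a.val ≤ b.val - 1 by omega)
      (show b.val - 1 < b.val by omega) (by omega)
  have A2 : H.Adj (⟨b.val, by omega⟩, 0) (⟨b.val + 1, by omega⟩, 0) :=
    cross_edge hH he W2 b.val (le_refl _) hbc' (by omega)
  have hbeq : b = (⟨b.val, by omega⟩ : Fin (k+1)) := Fin.ext rfl
  have hbeq' : (⟨b.val - 1 + 1, by omega⟩ : Fin (k+1)) = b := Fin.ext (by simp; omega)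
  have e := even3
    (x := (b, (1 : Fin 2)))
    (y := ((⟨b.val - 1, by omega⟩ : Fin (k+1)), (0 : Fin 2)))
    (z := ((⟨b.val + 1, by omega⟩ : Fin (k+1)), (0 : Fin 2)))
    (by simp [Prod.ext_iff, Fin.ext_iff] <;> omega)
    (by simp [Prod.ext_iff, Fin.ext_iff] <;> omega)
    (by simp [Prod.ext_iff, Fin.ext_iff] <;> omega)
    (nb_subset hH (p := b) (q := ⟨b.val - 1, by omega⟩) (r := ⟨b.val + 1, by omega⟩)
      (by simp; omega) (by simp) h01)
    (even_nb he _)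
  simp only [mem_nb] at e
  have m1 : H.Adj (b, 0) ((⟨b.val - 1, by omega⟩ : Fin (k+1)), (0 : Fin 2)) := by
    have h := A1.symm
    rw [hbeq'] at h
    exact h
  have m2 : H.Adj (b, 0) ((⟨b.val + 1, by omega⟩ : Fin (k+1)), (0 : Fin 2)) := A2
  exact (e.mp hb) (iff_of_true m1 m2)

end Main

/-- In the ladder graph with `k+1` rungs (`k ≥ 3`), no connected even subgraph contains
three distinct rungs.  (Connected means: any two vertices of nonzero degree are joined
by a walk of the subgraph.) -/
theorem stmt4 (k : ℕ) (hk : 3 ≤ k) :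
    ¬ ∃ (H : SimpleGraph (Fin (k + 1) × Fin 2)) (i₁ i₂ i₃ : Fin (k + 1)),
      H ≤ ladder k ∧ (∀ v, Even ((H.neighborSet v).ncard)) ∧
      (∀ u ∈ H.support, ∀ v ∈ H.support, H.Reachable u v) ∧
      i₁ ≠ i₂ ∧ i₁ ≠ i₃ ∧ i₂ ≠ i₃ ∧
      rung i₁ ∈ H.edgeSet ∧ rung i₂ ∈ H.edgeSet ∧ rung i₃ ∈ H.edgeSet := by
  rintro ⟨H, i₁, i₂, i₃, hH, he, hc, h12, h13, h23, e1, e2, e3⟩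
  rw [rung, mem_edgeSet] at e1 e2 e3
  rcases lt_trichotomy i₁ i₂ with ha | ha | ha
  · rcases lt_trichotomy i₂ i₃ with hb | hb | hb
    · exact key hH he hc i₁ i₂ i₃ ha hb e1 e2 e3
    · exact h23 hb
    · rcases lt_trichotomy i₁ i₃ with hd | hd | hd
      · exact key hH he hc i₁ i₃ i₂ hd hb e1 e3 e2
      · exact h13 hd
      · exact key hH he hc i₃ i₁ i₂ hd ha e3 e1 e2
  · exact h12 ha
  · rcases lt_trichotomy i₁ i₃ with hb | hb | hb
    · exact key hH he hc i₂ i₁ i₃ ha hb e2 e1 e3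
    · exact h13 hb
    · rcases lt_trichotomy i₂ i₃ with hd | hd | hd
      · exact key hH he hc i₂ i₃ i₁ hd hb e2 e3 e1
      · exact h23 hd
      · exact key hH he hc i₃ i₂ i₁ hd ha e3 e2 e1
end

section
/- Let G be a 2-edge-connected finite simple graph, H a circuit in G, and e = uv an edge of G not in E(H) such that e is not a bridge of G − E(H). Let D be the maximal 2-edge-connected subgraph of G − E(H) containing e. If D and H share a vertex, then there is a circuit of G whose edge set contains E(H) ∪ {e}. -/
open SimpleGraph

/-- A subgraph (given as a simple graph on the same vertex set) is 2-edge-connected: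
its support is connected within it, it has an edge, and it has no bridge. -/
def Is2ECSubgraph {V : Type*} (D : SimpleGraph V) : Prop :=
  (∀ u ∈ D.support, ∀ v ∈ D.support, D.Reachable u v) ∧ ∀ f, ¬ D.IsBridge f

/-!
Since `D` is connected and bridgeless, some circuit of `D` passes through any given vertex `w` of
`D` and through `e`. For `w` on the edge `e` this is a cycle through the non-bridge `e`; the
property then propagates along edges: given such a circuit `T` at `a` and an edge `wa` with `w` off
`T`, a walk from `w` to `a` avoiding the non-bridge `wa` first meets `T` at some `z`, and `wa`
followed by the half of `T` from `a` to `z` containing `e` and the walk back to `w` is a circuit.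
Taking `w` on `H`, this circuit lies in `G - E(H)`, so it is edge-disjoint from `H` and the two
concatenate at `w` to the required circuit.
-/

namespace SimpleGraph.Walk

variable {V : Type*} {G : SimpleGraph V}

lemma exists_prefix_to_first_mem {w x : V} (p : G.Walk w x) {S : Set V} (hx : x ∈ S) :
    ∃ z ∈ S, ∃ q : G.Walk w z, (∀ a ∈ q.support, a ∈ S → a = z) ∧ q.edges ⊆ p.edges := by
  induction p with
  | nil => exact ⟨_, hx, nil, by simp, by simp⟩
  | @cons w y x h p ih =>
    by_cases hw : w ∈ S
    · exact ⟨w, hw, nil, by simp, by simp⟩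
    obtain ⟨z, hz, q, hqS, hqp⟩ := ih hx
    refine ⟨z, hz, cons h q, ?_, ?_⟩
    · simp only [support_cons, List.mem_cons, forall_eq_or_imp]
      exact ⟨fun h => absurd h hw, hqS⟩
    · simpa only [edges_cons] using List.cons_subset_cons _ hqp

lemma IsTrail.exists_isTrail_mem_edges_of_mem_support {a z : V} {T : G.Walk a a}
    (hT : T.IsTrail) (hz : z ∈ T.support) {e : Sym2 V} (he : e ∈ T.edges) :
    ∃ A : G.Walk a z, A.IsTrail ∧ A.edges ⊆ T.edges ∧ e ∈ A.edges := by
  classical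
  rw [← T.take_spec hz, edges_append, List.mem_append] at he
  rcases he with he | he
  · exact ⟨T.takeUntil z hz, hT.takeUntil hz, T.edges_takeUntil_subset_edges hz, he⟩
  · refine ⟨(T.dropUntil z hz).reverse, (hT.dropUntil hz).reverse, ?_, ?_⟩
    · simpa only [edges_reverse, List.reverse_subset] using T.edges_dropUntil_subset_edges hz
    · rwa [edges_reverse, List.mem_reverse]

lemma isCircuit_cons_append_reverse {w a z : V} (h : G.Adj w a) {A : G.Walk a z}
    {P : G.Walk w z} (hA : A.IsTrail) (hP : P.IsTrail) (hAP : A.edges.Disjoint P.edges)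
    (hA' : s(w, a) ∉ A.edges) (hP' : s(w, a) ∉ P.edges) :
    (cons h (A.append P.reverse)).IsCircuit := by
  refine ⟨?_, by simp⟩
  simp only [isTrail_cons, isTrail_append, reverse_isTrail_iff, edges_append, edges_reverse,
    List.mem_append, List.mem_reverse, List.disjoint_reverse_right]
  tauto

lemma IsCircuit.append {w : V} {c₁ c₂ : G.Walk w w} (h₁ : c₁.IsCircuit) (h₂ : c₂.IsTrail)
    (h : c₁.edges.Disjoint c₂.edges) : (c₁.append c₂).IsCircuit := by
  refine ⟨(isTrail_append _ _).2 ⟨h₁.isTrail, h₂, h⟩, fun hnil => h₁.ne_nil ?_⟩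
  have := congrArg length hnil
  simp only [length_append, length_nil, Nat.add_eq_zero_iff, length_eq_zero_iff] at this
  exact eq_nil_iff_nil.2 this.1

lemma disjoint_edges_of_supports_meet_only_at_end {x y z : V} {P : G.Walk x z}
    {T : G.Walk y y}
    (hPT : ∀ b ∈ P.support, b ∈ T.support → b = z) : P.edges.Disjoint T.edges := by
  intro f hfP hfT
  induction f using Sym2.ind with
  | h b c =>
    have hb := hPT b (P.fst_mem_support_of_mem_edges hfP) (T.fst_mem_support_of_mem_edges hfT)
    have hc := hPT c (P.snd_mem_support_of_mem_edges hfP) (T.snd_mem_support_of_mem_edges hfT)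
    exact G.irrefl (hb ▸ hc ▸ P.adj_of_mem_edges hfP)

lemma IsCircuit.exists_isCircuit_of_adj (hG : ∀ f, ¬ G.IsBridge f) {a w : V} (h : G.Adj w a)
    {T : G.Walk a a} (hT : T.IsCircuit) {e : Sym2 V} (he : e ∈ T.edges) :
    ∃ c : G.Walk w w, c.IsCircuit ∧ e ∈ c.edges := by
  classical
  by_cases hw : w ∈ T.support
  · exact ⟨T.rotate w hw, hT.rotate hw, (T.rotate_edges w hw).mem_iff.2 he⟩
  have hfT : s(w, a) ∉ T.edges := fun hf => hw (T.fst_mem_support_of_mem_edges hf)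
  obtain ⟨p, hp⟩ : ∃ p : G.Walk w a, s(w, a) ∉ p.edges := by
    simpa [isBridge_iff_forall_walk_mem_edges] using hG s(w, a)
  obtain ⟨z, hz, q, hqT, hqp⟩ :=
    p.exists_prefix_to_first_mem (S := {b | b ∈ T.support}) T.start_mem_support
  let P : G.Walk w z := q.toPath
  have hPT : P.edges.Disjoint T.edges := disjoint_edges_of_supports_meet_only_at_end
    fun b hb hbT => hqT b (q.support_toPath_subset_support hb) hbT
  obtain ⟨A, hA, hAT, heA⟩ := hT.isTrail.exists_isTrail_mem_edges_of_mem_support hz he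
  refine ⟨cons h (A.append P.reverse), ?_, by simp [heA]⟩
  exact isCircuit_cons_append_reverse h hA q.toPath.property.isTrail
    (fun f hfA hfP => hPT hfP (hAT hfA)) (fun hf => hfT (hAT hf))
    (fun hf => hp (hqp (q.edges_toPath_subset_edges hf)))

end SimpleGraph.Walk

namespace SimpleGraph

variable {V : Type*} {G : SimpleGraph V}

theorem exists_isCircuit_mem_edges_of_reachable (hG : ∀ f, ¬ G.IsBridge f) {u v w : V}
    (huv : G.Adj u v) (hwu : G.Reachable w u) :
    ∃ c : G.Walk w w, c.IsCircuit ∧ s(u, v) ∈ c.edges := by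
  classical
  obtain ⟨p⟩ := hwu
  induction p with
  | nil =>
    obtain ⟨x, c, hc, he⟩ :=
      adj_and_reachable_delete_edges_iff_exists_cycle.1 ⟨huv, not_not.1 (hG s(_, v))⟩
    have hu := c.fst_mem_support_of_mem_edges he
    exact ⟨c.rotate _ hu, hc.isCircuit.rotate hu, (c.rotate_edges _ hu).mem_iff.2 he⟩
  | cons h p ih =>
    obtain ⟨c, hc, he⟩ := ih huv
    exact hc.exists_isCircuit_of_adj hG h he

end SimpleGraph

theorem stmt5_general {V : Type*} (G : SimpleGraph V)
    (x : V) (H : G.Walk x x) (hH : H.IsCircuit)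
    (u v : V)
    (D : SimpleGraph V) (hDle : D ≤ G.deleteEdges {f | f ∈ H.edges})
    (heD : s(u, v) ∈ D.edgeSet) (hD2 : Is2ECSubgraph D)
    (hshare : ∃ w, w ∈ D.support ∧ w ∈ H.support) :
    ∃ (y : V) (c : G.Walk y y), c.IsCircuit ∧ (∀ f ∈ H.edges, f ∈ c.edges) ∧
      s(u, v) ∈ c.edges := by
  classical
  obtain ⟨w, hwD, hwH⟩ := hshare
  have huv : D.Adj u v := heD
  obtain ⟨T, hT, heT⟩ :=
    exists_isCircuit_mem_edges_of_reachable hD2.2 huv (hD2.1 w hwD u ⟨v, huv⟩)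
  have hDG : D ≤ G := hDle.trans (G.deleteEdges_le _)
  have hTH : (T.mapLe hDG).edges.Disjoint (H.rotate w hwH).edges := by
    rw [Walk.edges_mapLe_eq_edges]
    intro f hfT hfH
    have hf := edgeSet_mono hDle (T.edges_subset_edgeSet hfT)
    rw [edgeSet_deleteEdges] at hf
    exact hf.2 ((H.rotate_edges w hwH).mem_iff.1 hfH)
  refine ⟨w, (T.mapLe hDG).append (H.rotate w hwH),
    (hT.mapLe hDG).append (hH.rotate hwH).isTrail hTH, fun f hf => ?_, ?_⟩
  · simp [(H.rotate_edges w hwH).mem_iff, hf]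
  · simp [heT]

/-- If `G` is 2-edge-connected, `H` is a circuit of `G`, `e = uv ∉ E(H)` is not a bridge
of `G - E(H)`, `D` is the maximal 2-edge-connected subgraph of `G - E(H)` containing `e`,
and `D` and `H` share a vertex, then `G` has a circuit through `E(H) ∪ {e}`. -/
theorem stmt5 {V : Type*} [Fintype V] (G : SimpleGraph V)
    (hGconn : G.Connected) (hGnb : ∀ f, ¬ G.IsBridge f)
    (x : V) (H : G.Walk x x) (hH : H.IsCircuit)
    (u v : V) (huv : G.Adj u v) (heH : s(u, v) ∉ H.edges)
    (hnb : ¬ (G.deleteEdges {f | f ∈ H.edges}).IsBridge s(u, v))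
    (D : SimpleGraph V) (hDle : D ≤ G.deleteEdges {f | f ∈ H.edges})
    (heD : s(u, v) ∈ D.edgeSet) (hD2 : Is2ECSubgraph D)
    (hmax : ∀ D' : SimpleGraph V, D ≤ D' → D' ≤ G.deleteEdges {f | f ∈ H.edges} →
      Is2ECSubgraph D' → s(u, v) ∈ D'.edgeSet → D' = D)
    (hshare : ∃ w, w ∈ D.support ∧ w ∈ H.support) :
    ∃ (y : V) (c : G.Walk y y), c.IsCircuit ∧ (∀ f ∈ H.edges, f ∈ c.edges) ∧
      s(u, v) ∈ c.edges :=
  stmt5_general G x H hH u v D hDle heD hD2 hshare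
end

section
/- Let D be a 2-edge-connected finite simple graph, e an edge of D, and u, u′ two (not necessarily distinct) vertices of D. Then there is a trail in D from u to u′ whose edge set contains e. -/
open SimpleGraph

/-!
An edge `e` that is not a bridge lies on a cycle. A closed trail through `e` can be moved
from a vertex `w` to a neighbour `u` across a non-bridge edge `uw`: if `u` is off the trail,
take a `u`–`w` path avoiding `uw`, follow it until it first meets the trail, go around the
trail through `e` to `w`, and return along `uw`. Moving along a walk gives a closed trail
through `e` at `u'`; a path from `u` to its first vertex on that trail, followed by the arc of
the trail through `e` to `u'`, is the required trail.
-/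

namespace SimpleGraph.Walk

variable {V : Type*} {G : SimpleGraph V}

theorem IsTrail.exists_trail_mem_edges_of_mem_support {v x : V} {e : Sym2 V}
    {C : G.Walk v v} (hC : C.IsTrail) (heC : e ∈ C.edges) (hx : x ∈ C.support) :
    ∃ T : G.Walk x v, T.IsTrail ∧ e ∈ T.edges ∧ T.edges ⊆ C.edges := by
  classical
  have he : e ∈ (C.takeUntil x hx).edges ++ (C.dropUntil x hx).edges := by
    rwa [← edges_append, take_spec]
  rcases List.mem_append.mp he with he | he
  · refine ⟨(C.takeUntil x hx).reverse, (hC.takeUntil hx).reverse, by simpa using he, ?_⟩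
    simpa using C.edges_takeUntil_subset_edges hx
  · exact ⟨C.dropUntil x hx, hC.dropUntil hx, he, C.edges_dropUntil_subset_edges hx⟩

theorem exists_walk_to_support_edges_disjoint {a b u v : V} (C : G.Walk a b)
    (R : G.Walk u v) (hv : v ∈ C.support) :
    ∃ x ∈ C.support, ∃ Q : G.Walk u x, Q.edges.Sublist R.edges ∧ Q.edges.Disjoint C.edges := by
  induction R with
  | nil => exact ⟨_, hv, nil, by simp, by simp⟩
  | @cons u w v h R ih =>
    by_cases hu : u ∈ C.support
    · exact ⟨u, hu, nil, by simp, by simp⟩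
    · obtain ⟨x, hx, Q, hQR, hQC⟩ := ih hv
      refine ⟨x, hx, cons h Q, by simpa using hQR.cons_cons s(u, w), ?_⟩
      rw [edges_cons, List.disjoint_cons_left]
      exact ⟨fun huw => hu (C.fst_mem_support_of_mem_edges huw), hQC⟩

theorem IsTrail.exists_trail_mem_edges_of_isTrail {u v : V} {e : Sym2 V} {C : G.Walk v v}
    (hC : C.IsTrail) (heC : e ∈ C.edges) {R : G.Walk u v} (hR : R.IsTrail) :
    ∃ T : G.Walk u v, T.IsTrail ∧ e ∈ T.edges ∧ T.edges ⊆ R.edges ++ C.edges := by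
  obtain ⟨x, hx, Q, hQR, hQC⟩ := C.exists_walk_to_support_edges_disjoint R C.start_mem_support
  obtain ⟨T, hT, heT, hTC⟩ := hC.exists_trail_mem_edges_of_mem_support heC hx
  refine ⟨Q.append T, ?_, by simp [heT], ?_⟩
  · rw [isTrail_append]
    exact ⟨⟨hQR.nodup hR.edges_nodup⟩, hT, List.disjoint_of_subset_right hTC hQC⟩
  · intro f hf
    rw [edges_append, List.mem_append] at hf
    exact List.mem_append.mpr (hf.imp (fun hf => hQR.subset hf) (fun hf => hTC hf))

end SimpleGraph.Walk

namespace SimpleGraph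

open Walk

variable {V : Type*} {G : SimpleGraph V}

theorem exists_closed_trail_mem_edges_of_adj {u w : V} {e : Sym2 V} (h : G.Adj u w)
    (hb : ¬ G.IsBridge s(u, w)) {C : G.Walk w w} (hC : C.IsTrail) (heC : e ∈ C.edges) :
    ∃ C' : G.Walk u u, C'.IsTrail ∧ e ∈ C'.edges := by
  classical
  by_cases hu : u ∈ C.support
  · exact ⟨C.rotate u hu, hC.rotate hu, (C.rotate_edges u hu).mem_iff.mpr heC⟩
  obtain ⟨R, hR⟩ : ∃ R : G.Walk u w, s(u, w) ∉ R.edges := by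
    simpa [isBridge_iff_forall_walk_mem_edges] using hb
  obtain ⟨T, hT, heT, hTRC⟩ := hC.exists_trail_mem_edges_of_isTrail heC R.bypass_isPath.isTrail
  have huwT : s(u, w) ∉ T.edges := fun huw => by
    rcases List.mem_append.mp (hTRC huw) with huw | huw
    · exact hR (R.edges_bypass_subset_edges huw)
    · exact hu (C.fst_mem_support_of_mem_edges huw)
  exact ⟨cons h T.reverse, by simpa [isTrail_cons] using ⟨hT, huwT⟩, by simp [heT]⟩

theorem exists_closed_trail_mem_edges_of_walk {u w : V} {e : Sym2 V} (p : G.Walk u w)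
    (hp : ∀ f ∈ p.edges, ¬ G.IsBridge f) {C : G.Walk w w} (hC : C.IsTrail)
    (heC : e ∈ C.edges) : ∃ C' : G.Walk u u, C'.IsTrail ∧ e ∈ C'.edges := by
  induction p with
  | nil => exact ⟨C, hC, heC⟩
  | cons h p ih =>
    obtain ⟨C', hC', heC'⟩ := ih (fun f hf => hp f (by simp [hf])) hC heC
    exact exists_closed_trail_mem_edges_of_adj h (hp _ (by simp)) hC' heC'

end SimpleGraph

theorem stmt6_general {V : Type*} (D : SimpleGraph V)
    (hconn : D.Connected) (hnb : ∀ f, ¬ D.IsBridge f)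
    (e : Sym2 V) (he : e ∈ D.edgeSet) (u u' : V) :
    ∃ p : D.Walk u u', p.IsTrail ∧ e ∈ p.edges := by
  classical
  obtain ⟨a, C, hC, heC⟩ : ∃ a, ∃ C : D.Walk a a, C.IsCycle ∧ e ∈ C.edges := by
    simpa [isBridge_iff_forall_cycle_notMem he] using hnb e
  obtain ⟨C', hC', heC'⟩ :=
    exists_closed_trail_mem_edges_of_walk (hconn u' a).some (fun f _ => hnb f) hC.isTrail heC
  obtain ⟨T, hT, heT, -⟩ :=
    hC'.exists_trail_mem_edges_of_isTrail heC' (hconn u u').some.bypass_isPath.isTrail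
  exact ⟨T, hT, heT⟩

/-- In a 2-edge-connected finite simple graph `D` (connected, at least two vertices,
no bridge), for any edge `e` and any two vertices `u, u'` there is a trail from `u`
to `u'` whose edge set contains `e`. -/
theorem stmt6 {V : Type*} [Fintype V] (D : SimpleGraph V)
    (hconn : D.Connected) (hcard : 2 ≤ Fintype.card V) (hnb : ∀ f, ¬ D.IsBridge f)
    (e : Sym2 V) (he : e ∈ D.edgeSet) (u u' : V) :
    ∃ p : D.Walk u u', p.IsTrail ∧ e ∈ p.edges :=
  stmt6_general D hconn hnb e he u u'
end
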